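/- arXiv:1610.10000 — 2 statements merged into one kernel-verified Lean document; each statement's English description precedes it below -/
import Mathlib

section
/- Let F : [0,1] → ℝ be strictly concave with F(0) = 0 and F(1) = 1. Fix k ≥ 2 and define, for 0 = r_0 < r_1 < ... < r_{k-1} < r_k = 1, C(R) = ∑_{j=1}^k (r_j - r_{j-1})(F(r_j) - F(r_{j-1})). If R* = (r_1*,...,r_{k-1}*) minimizes C over all such strictly increasing tuples, then the consecutive widths are monotone non-decreasing: r_1* - r_0* ≤ r_2* - r_1* ≤ ... ≤ r_k* - r_{k-1}*. -/
/-!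
Suppose two consecutive widths decrease, `b - a > c - b` with `a = r j`, `b = r (j + 1)`,
`c = r (j + 2)`. Reflecting the middle point to `a + c - b` swaps the two widths and changes
the cost by `((c - b) - (b - a)) * (F b + F (a + c - b) - F a - F c)`, which is negative because
strict concavity gives `F a + F c < F b + F (a + c - b)`. This contradicts minimality.
-/

open Finset Function

theorem StrictConcaveOn.add_lt_add_reflect {s : Set ℝ} {f : ℝ → ℝ} (hf : StrictConcaveOn ℝ s f)
    {a b c : ℝ} (ha : a ∈ s) (hc : c ∈ s) (hab : a < b) (hbc : b < c) :
    f a + f c < f b + f (a + c - b) := by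
  have hca : 0 < c - a := by linarith
  set t := (b - a) / (c - a) with ht
  have ht0 : 0 < t := div_pos (by linarith) hca
  have ht1 : 0 < 1 - t := by
    rw [ht, one_sub_div hca.ne']
    exact div_pos (by linarith) hca
  have hb : (1 - t) • a + t • c = b := by
    simp only [smul_eq_mul, ht]; field_simp; ring
  have hb' : t • a + (1 - t) • c = a + c - b := by
    simp only [smul_eq_mul, ht]; field_simp; ring
  have hac : a ≠ c := (hab.trans hbc).ne
  have hlt := hf.2 ha hc hac ht1 ht0 (sub_add_cancel 1 t)
  have hlt' := hf.2 ha hc hac ht0 ht1 (add_sub_cancel t 1)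
  rw [hb] at hlt
  rw [hb'] at hlt'
  simp only [smul_eq_mul] at hlt hlt'
  linarith

theorem Finset.sum_range_update_adjacent {α M : Type*} [AddCommGroup M] (g : α → α → M)
    (r : ℕ → α) {j k : ℕ} (hj : j + 1 < k) (x : α) :
    ∑ i ∈ range k, g (update r (j + 1) x i) (update r (j + 1) x (i + 1)) =
      ∑ i ∈ range k, g (r i) (r (i + 1)) +
        (g (r j) x + g x (r (j + 2)) - g (r j) (r (j + 1)) - g (r (j + 1)) (r (j + 2))) := by
  rw [← sub_eq_iff_eq_add', ← sum_sub_distrib,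
    sum_eq_add_of_mem j (j + 1) (by simp; omega) (by simpa using hj) (by omega)]
  · rw [update_self, update_of_ne (by omega), update_of_ne (by omega)]
    abel
  · intro i _ hi
    simp [hi.1, hi.2]

theorem update_lt_update_succ {α : Type*} [Preorder α] {r : ℕ → α} {k : ℕ}
    (hr : ∀ i < k, r i < r (i + 1)) {j : ℕ} {x : α} (hjx : r j < x) (hxj : x < r (j + 2)) :
    ∀ i < k, update r (j + 1) x i < update r (j + 1) x (i + 1) := by
  intro i hi
  simp only [update_apply]
  split_ifs with h h'
  · omega
  · subst h; exact hxj
  · obtain rfl : i = j := by omega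
    exact hjx
  · exact hr i hi

theorem mem_Icc_of_lt_succ {α : Type*} [Preorder α] {r : ℕ → α} {k : ℕ}
    (hr : ∀ i < k, r i < r (i + 1)) {i : ℕ} (hi : i ≤ k) : r i ∈ Set.Icc (r 0) (r k) := by
  have hmono := (strictMonoOn_Iic_of_lt_succ (ψ := r) fun m hm => by
    simpa using hr m hm).monotoneOn
  exact ⟨hmono (Nat.zero_le k) hi (Nat.zero_le i), hmono hi (Set.mem_Iic.2 le_rfl) hi⟩

theorem stmt_5_general (F : ℝ → ℝ) (hF : StrictConcaveOn ℝ (Set.Icc (0 : ℝ) 1) F)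
    (k : ℕ) (r : ℕ → ℝ) (hr0 : r 0 = 0) (hrk : r k = 1) (hmono : ∀ j < k, r j < r (j + 1))
    (hopt : ∀ r' : ℕ → ℝ, r' 0 = 0 → r' k = 1 → (∀ j < k, r' j < r' (j + 1)) →
      (∑ j ∈ Finset.range k, (r (j + 1) - r j) * (F (r (j + 1)) - F (r j))) ≤
        ∑ j ∈ Finset.range k, (r' (j + 1) - r' j) * (F (r' (j + 1)) - F (r' j))) :
    ∀ j, j + 1 < k → r (j + 1) - r j ≤ r (j + 2) - r (j + 1) := by
  intro j hj
  by_contra! hwide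
  have hab := hmono j (by omega)
  have hbc := hmono (j + 1) hj
  have hmem : ∀ i ≤ k, r i ∈ Set.Icc (0 : ℝ) 1 := fun i hi =>
    hr0 ▸ hrk ▸ mem_Icc_of_lt_succ hmono hi
  have hconc := hF.add_lt_add_reflect (hmem j (by omega)) (hmem (j + 2) hj) hab hbc
  have hcost := hopt (update r (j + 1) (r j + r (j + 2) - r (j + 1)))
    (by simp [hr0]) (by simp [hrk, show k ≠ j + 1 by omega])
    (update_lt_update_succ hmono (by linarith) (by linarith))
  rw [sum_range_update_adjacent (fun x y => (y - x) * (F y - F x)) r hj] at hcost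
  nlinarith [mul_pos (sub_pos.2 hwide) (sub_pos.2 hconc)]

theorem stmt_5 (F : ℝ → ℝ) (hF : StrictConcaveOn ℝ (Set.Icc (0 : ℝ) 1) F)
    (hF0 : F 0 = 0) (hF1 : F 1 = 1) (k : ℕ) (hk : 2 ≤ k)
    (r : ℕ → ℝ) (hr0 : r 0 = 0) (hrk : r k = 1) (hmono : ∀ j < k, r j < r (j + 1))
    (hopt : ∀ r' : ℕ → ℝ, r' 0 = 0 → r' k = 1 → (∀ j < k, r' j < r' (j + 1)) →
      (∑ j ∈ Finset.range k, (r (j + 1) - r j) * (F (r (j + 1)) - F (r j))) ≤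
        ∑ j ∈ Finset.range k, (r' (j + 1) - r' j) * (F (r' (j + 1)) - F (r' j))) :
    ∀ j, j + 1 < k → r (j + 1) - r j ≤ r (j + 2) - r (j + 1) :=
  stmt_5_general F hF k r hr0 hrk hmono hopt
end

section
/- Let z^1,...,z^n be i.i.d. [0,1]-valued random variables with CDF F, F_n their empirical CDF, k ≥ 2, and assume the DKW inequality holds. Let 𝒮 be any collection of strictly increasing (k-1)-tuples R in (0,1) such that every R ∈ 𝒮 has monotone non-decreasing widths Δr_1 ≤ ... ≤ Δr_k. Then for all ε > 0, P[sup_{R∈𝒮} |C_n(R) - C(R)| > ε] ≤ 2 exp(-2nε²). -/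
open MeasureTheory

open Finset

lemma key_det (k : ℕ) (hk : 2 ≤ k) (r g : ℕ → ℝ)
    (hr0 : r 0 = 0) (hrk : r k = 1)
    (hinc : ∀ j < k, r j < r (j + 1))
    (hmono : ∀ j, 1 ≤ j → j < k → r j - r (j - 1) ≤ r (j + 1) - r j)
    (hg0 : g 0 = 0) (hgk : g k = 0)
    (ε : ℝ) (hb : ∀ j ≤ k, |g j| ≤ ε) :
    |∑ j ∈ range k, (r (j + 1) - r j) * (g (j + 1) - g j)| ≤ ε := by
  have hmon : ∀ i j, i ≤ j → j ≤ k → r i ≤ r j := by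
    intro i j hij hjk
    induction j with
    | zero => simp_all
    | succ m ih =>
      rcases Nat.lt_or_ge i (m+1) with h | h
      · have : r i ≤ r m := ih (Nat.lt_succ_iff.mp h) (le_trans (Nat.le_succ m) hjk)
        exact le_trans this (le_of_lt (hinc m (Nat.lt_of_succ_le hjk)))
      · have : i = m + 1 := le_antisymm hij h
        simp [this]
  -- Abel summation
  have habel : ∑ j ∈ range k, (r (j + 1) - r j) * (g (j + 1) - g j)
      = - ∑ i ∈ range (k - 1), ((r (i + 2) - r (i + 1)) - (r (i + 1) - r i)) * g (i + 1) := by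
    have := Finset.sum_range_by_parts (fun j => r (j + 1) - r j) (fun j => g (j + 1) - g j) k
    simp only [smul_eq_mul] at this
    rw [this]
    have h1 : ∀ m, ∑ j ∈ range m, (g (j + 1) - g j) = g m - g 0 := fun m =>
      Finset.sum_range_sub g m
    rw [h1]
    have h2 : ∀ i ∈ range (k - 1),
        ((r (i + 1 + 1) - r (i + 1)) - (r (i + 1) - r i)) * (∑ j ∈ range (i + 1), (g (j+1) - g j))
        = ((r (i + 2) - r (i + 1)) - (r (i + 1) - r i)) * g (i + 1) := by
      intro i _
      rw [h1]
      simp [hg0]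
    rw [Finset.sum_congr rfl h2]
    have hk1 : k - 1 + 1 = k := by omega
    rw [hg0, hgk]
    ring
  rw [habel, abs_neg]
  have hεnn : 0 ≤ ε := le_trans (abs_nonneg _) (hb 0 (Nat.zero_le k))
  calc |∑ i ∈ range (k - 1), ((r (i + 2) - r (i + 1)) - (r (i + 1) - r i)) * g (i + 1)|
      ≤ ∑ i ∈ range (k - 1), |((r (i + 2) - r (i + 1)) - (r (i + 1) - r i)) * g (i + 1)| :=
        Finset.abs_sum_le_sum_abs _ _
    _ ≤ ∑ i ∈ range (k - 1), ((r (i + 2) - r (i + 1)) - (r (i + 1) - r i)) * ε := by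
        apply Finset.sum_le_sum
        intro i hi
        have hik : i + 1 < k := by simp at hi; omega
        have hΔ : 0 ≤ (r (i + 2) - r (i + 1)) - (r (i + 1) - r i) := by
          have := hmono (i + 1) (by omega) hik
          simp only [Nat.add_sub_cancel] at this
          linarith
        rw [abs_mul, abs_of_nonneg hΔ]
        exact mul_le_mul_of_nonneg_left (hb (i + 1) (by omega)) hΔ
    _ = ((r (k - 1 + 1) - r (k - 1)) - (r 1 - r 0)) * ε := by
        rw [← Finset.sum_mul]
        congr 1
        have := Finset.sum_range_sub (fun i => r (i + 1) - r i) (k - 1)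
        simpa using this
    _ ≤ 1 * ε := by
        apply mul_le_mul_of_nonneg_right _ hεnn
        have hk1 : k - 1 + 1 = k := by omega
        rw [hk1, hrk, hr0]
        have h1 : 0 ≤ r 1 := by rw [← hr0]; exact le_of_lt (hinc 0 (by omega))
        have h2 : r 1 ≤ r (k - 1) := hmon 1 (k - 1) (by omega) (by omega)
        linarith
    _ = ε := one_mul ε

theorem stmt_16 {Ω : Type*} [MeasurableSpace Ω] (μ : Measure Ω) [IsProbabilityMeasure μ]
    (n k : ℕ) (hn : 0 < n) (hk : 2 ≤ k)
    (z : Fin n → Ω → ℝ) (hz : ∀ i ω, z i ω ∈ Set.Icc (0 : ℝ) 1)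
    (F : ℝ → ℝ) (hF0 : F 0 = 0) (hF1 : F 1 = 1)
    (Fn : Ω → ℝ → ℝ)
    (hFn : ∀ ω t, Fn ω t = (1 / n : ℝ) * ∑ i, (if z i ω ≤ t then (1 : ℝ) else 0))
    (hFn0 : ∀ ω, Fn ω 0 = 0) (hFn1 : ∀ ω, Fn ω 1 = 1)
    (hDKW : ∀ δ : ℝ, 0 < δ →
      μ {ω | ∃ t : ℝ, δ < |Fn ω t - F t|} ≤
        ENNReal.ofReal (2 * Real.exp (-2 * n * δ ^ 2)))
    (S : Set (ℕ → ℝ))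
    (hS : ∀ r ∈ S, r 0 = 0 ∧ r k = 1 ∧ (∀ j < k, r j < r (j + 1)) ∧
      (∀ j, 1 ≤ j → j < k → r j - r (j - 1) ≤ r (j + 1) - r j))
    (ε : ℝ) (hε : 0 < ε) :
    μ {ω | ∃ r ∈ S,
        ε < |(∑ j ∈ Finset.range k, (r (j + 1) - r j) * (Fn ω (r (j + 1)) - Fn ω (r j))) -
              (∑ j ∈ Finset.range k, (r (j + 1) - r j) * (F (r (j + 1)) - F (r j)))|} ≤
      ENNReal.ofReal (2 * Real.exp (-2 * n * ε ^ 2)) := by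
  refine le_trans (measure_mono ?_) (hDKW ε hε)
  intro ω hω
  obtain ⟨r, hrS, hlt⟩ := hω
  obtain ⟨hr0, hrk, hinc, hmono⟩ := hS r hrS
  by_contra hcon
  simp only [Set.mem_setOf_eq, not_exists, not_lt] at hcon
  set g : ℕ → ℝ := fun j => Fn ω (r j) - F (r j) with hg
  have hsum : (∑ j ∈ Finset.range k, (r (j + 1) - r j) * (Fn ω (r (j + 1)) - Fn ω (r j))) -
      (∑ j ∈ Finset.range k, (r (j + 1) - r j) * (F (r (j + 1)) - F (r j)))
      = ∑ j ∈ Finset.range k, (r (j + 1) - r j) * (g (j + 1) - g j) := by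
    rw [← Finset.sum_sub_distrib]
    refine Finset.sum_congr rfl fun j _ => ?_
    simp only [hg]
    ring
  rw [hsum] at hlt
  have := key_det k hk r g hr0 hrk hinc hmono
    (by simp [hg, hr0, hFn0 ω, hF0]) (by simp [hg, hrk, hFn1 ω, hF1]) ε
    (fun j _ => hcon (r j))
  linarith [lt_of_lt_of_le hlt this]
end
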